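/- Let K be a Galois number field of degree k and let a_K(n) denote the number of integral ideals of O_K of absolute norm n. Then for every positive integer n = ∏_j p_j^{α_j}, where p_j decomposes in O_K into r_j primes of residue degree f_j, one has a_K(n) ≤ a_K(n*) = ∏_j τ_{r_j}(p_j^{⌈α_j/f_j⌉}) ≤ τ_k(n). -/

import Mathlib

/-!
By unique factorisation, an ideal of norm `N = ∏ p ^ e p` is `∏ P ^ v P` over the prime ideals `P`
above the primes `p ∣ N`; as each such `P` has norm `p ^ f p`, the exponents are only constrained
by `f p * ∑_{P ∣ p} v P = e p`. So `a_K(N)` is a product over `p` of numbers of `r p`-tuples of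
naturals whose sum, multiplied by `f p`, is `e p`. For `N = n*` the sum is `⌈α p / f p⌉`, and
stars and bars identifies the factor with `τ_{r p}(p ^ ⌈α p / f p⌉)`; for `N = n` the tuples
counted are among these, whence `a_K(n) ≤ a_K(n*)`. In the same way `τ_k(n)` is the product of the
numbers of `k`-tuples with sum `α p`, and the number of tuples grows with their length
(`r p ≤ k`) and with their sum (`⌈α p / f p⌉ ≤ α p`).
-/

open NumberField

noncomputable section

/-- τ_m(n): number of m-tuples of positive integers with product n. -/
def tauk (k n : ℕ) : ℕ := Nat.card {t : Fin k → ℕ // (∀ i, 0 < t i) ∧ ∏ i, t i = n}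

/-- n* = ∏ p^{f_p ⌈α_p/f_p⌉}, where fd gives the residue degrees. -/
def nStar (fd : ℕ → ℕ) (n : ℕ) : ℕ :=
  ∏ p ∈ n.primeFactors, p ^ (fd p * ((n.factorization p + fd p - 1) / fd p))

/-- a_K(n): number of integral ideals of norm n. -/
def aK (K : Type) [Field K] [NumberField K] (n : ℕ) : ℕ :=
  Nat.card {𝔞 : Ideal (𝓞 K) // Ideal.absNorm 𝔞 = n}

/-- The number of distinct prime ideals of 𝓞 K lying above p. -/
def rdeg (K : Type) [Field K] [NumberField K] (p : ℕ) : ℕ :=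
  Nat.card {P : Ideal (𝓞 K) // P.IsMaximal ∧ (p : 𝓞 K) ∈ P}

open Finset UniqueFactorizationMonoid

section PrimePowerProducts

theorem Nat.factorization_prod_pow_of_injective {ι : Type*} [Fintype ι] {π : ι → ℕ}
    (hπ : ∀ i, (π i).Prime) (hinj : π.Injective) (e : ι → ℕ) (i : ι) :
    (∏ j, π j ^ e j).factorization (π i) = e i := by
  classical
  rw [Nat.factorization_prod fun j _ => pow_ne_zero _ (hπ j).ne_zero, Finsupp.finsetSum_apply]
  simp [(hπ _).factorization_pow, Finsupp.single_apply, hinj.eq_iff]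

theorem Nat.prod_pow_injective {ι : Type*} [Fintype ι] {π : ι → ℕ}
    (hπ : ∀ i, (π i).Prime) (hinj : π.Injective) :
    Function.Injective fun e : ι → ℕ => ∏ i, π i ^ e i := fun a b h => funext fun i => by
  simpa only [Nat.factorization_prod_pow_of_injective hπ hinj] using
    congrArg (fun n => n.factorization (π i)) h

variable {s : Finset ℕ}

theorem Nat.factorization_prod_pow_of_mem (hs : ∀ p ∈ s, p.Prime) (e : ℕ → ℕ) {q : ℕ}
    (hq : q ∈ s) : (∏ p ∈ s, p ^ e p).factorization q = e q := by
  rw [← prod_coe_sort]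
  exact Nat.factorization_prod_pow_of_injective (fun p : s => hs p p.2) Subtype.val_injective
    (fun p => e p) ⟨q, hq⟩

theorem Nat.primeFactors_prod_pow_subset (hs : ∀ p ∈ s, p.Prime) (e : ℕ → ℕ) :
    (∏ p ∈ s, p ^ e p).primeFactors ⊆ s := by
  intro q hq
  have hq' := Nat.prime_of_mem_primeFactors hq
  obtain ⟨p, hp, hqp⟩ := (hq'.prime.dvd_finsetProd_iff _).1 (Nat.dvd_of_mem_primeFactors hq)
  rwa [(Nat.prime_dvd_prime_iff_eq hq' (hs p hp)).1 (hq'.dvd_of_dvd_pow hqp)]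

theorem Nat.prod_pow_factorization_of_primeFactors_subset {n : ℕ} (hn : n ≠ 0)
    (hs : n.primeFactors ⊆ s) : ∏ p ∈ s, p ^ n.factorization p = n := by
  conv_rhs => rw [← Nat.prod_factorization_pow_eq_self hn]
  exact (Finsupp.prod_of_support_subset _ (by simpa using hs) _ fun _ _ => pow_zero _).symm

end PrimePowerProducts

section StarsAndBars

theorem Nat.card_sum_eq_multichoose (X : Type*) [Fintype X] (β : ℕ) :
    Nat.card {v : X → ℕ // ∑ x, v x = β} = (Nat.card X).multichoose β := by
  classical
  rw [← Nat.card_congr (Sym.equivNatSumOfFintype X β), Sym.natCard_sym_eq_multichoose]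

theorem Nat.finite_sum_eq (X : Type*) [Fintype X] (β : ℕ) :
    Finite {v : X → ℕ // ∑ x, v x = β} := by
  classical
  exact Finite.of_equiv _ (Sym.equivNatSumOfFintype X β)

theorem Nat.multichoose_le_multichoose {r k β α : ℕ} (hrk : r ≤ k) (hβα : β ≤ α) (hk : k ≠ 0) :
    r.multichoose β ≤ k.multichoose α := by
  obtain ⟨k, rfl⟩ := Nat.exists_eq_succ_of_ne_zero hk
  have hmono : Monotone (k + 1).multichoose := monotone_nat_of_le_succ fun b => by
    rw [Nat.multichoose_succ_succ]
    exact Nat.le_add_left _ _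
  calc r.multichoose β ≤ (k + 1).multichoose β := by
        simp only [Nat.multichoose_eq]
        exact Nat.choose_le_choose β (by omega)
    _ ≤ (k + 1).multichoose α := hmono hβα

theorem Nat.card_mul_sum_eq_le_card_sum_eq_ceilDiv (X : Type*) [Fintype X] {f : ℕ} (hf : 0 < f)
    (α : ℕ) : Nat.card {v : X → ℕ // f * ∑ x, v x = α} ≤
      Nat.card {v : X → ℕ // ∑ x, v x = α ⌈/⌉ f} := by
  have := Nat.finite_sum_eq X (α ⌈/⌉ f)
  exact Nat.card_le_card_of_injective
    (fun v => ⟨v.1, (smul_ceilDiv hf _).symm.trans (congrArg (· ⌈/⌉ f) v.2)⟩)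
    fun v w h => Subtype.ext (congrArg Subtype.val h :)

end StarsAndBars

theorem tauk_prod_pow {s : Finset ℕ} (hs : ∀ p ∈ s, p.Prime) (e : ℕ → ℕ) (k : ℕ) :
    tauk k (∏ p ∈ s, p ^ e p) = ∏ p ∈ s, k.multichoose (e p) := by
  have hN : ∏ p ∈ s, p ^ e p ≠ 0 := prod_ne_zero_iff.2 fun p hp => pow_ne_zero _ (hs p hp).ne_zero
  have hcard (p : ℕ) : k.multichoose (e p) = Nat.card {v : Fin k → ℕ // ∑ i, v i = e p} := by
    rw [Nat.card_sum_eq_multichoose, Nat.card_fin]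
  simp_rw [hcard]
  conv_rhs => rw [← prod_coe_sort, ← Nat.card_pi, ← Nat.card_congr Equiv.subtypePiEquivPi]
  have hprod (g : {g : s → Fin k → ℕ // ∀ p, ∑ i, g p i = e p}) :
      ∏ i, ∏ p : s, (p : ℕ) ^ g.1 p i = ∏ p ∈ s, p ^ e p := by
    rw [prod_comm, ← prod_coe_sort s]
    simp_rw [prod_pow_eq_pow_sum, g.2]
  refine (Nat.card_eq_of_bijective (fun g => ⟨fun i => ∏ p : s, (p : ℕ) ^ g.1 p i,
    fun i => prod_pos fun p _ => pow_pos (hs p p.2).pos _, hprod g⟩) ⟨fun g g' hgg' => ?_, ?_⟩).symm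
  · ext p i
    have hfac := Nat.factorization_prod_pow_of_injective (fun p : s => hs p p.2)
      Subtype.val_injective
    exact (hfac (fun p => g.1 p i) p).symm.trans <| (congrArg (fun t =>
      (t.1 i).factorization p) hgg').trans (hfac _ p)
  · rintro ⟨t, htpos, htprod⟩
    refine ⟨⟨fun p i => (t i).factorization p, fun p => ?_⟩, Subtype.ext (funext fun i => ?_)⟩
    · rw [← Nat.factorization_prod_pow_of_mem hs e p.2, ← htprod,
        Nat.factorization_prod fun i _ => (htpos i).ne', Finsupp.finsetSum_apply]
    · have hdvd : t i ∣ ∏ p ∈ s, p ^ e p := htprod ▸ dvd_prod_of_mem t (mem_univ i)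
      show ∏ p : s, (p : ℕ) ^ (t i).factorization p = t i
      rw [prod_coe_sort s fun p => p ^ (t i).factorization p]
      exact Nat.prod_pow_factorization_of_primeFactors_subset (htpos i).ne'
        ((Nat.primeFactors_mono hdvd hN).trans (Nat.primeFactors_prod_pow_subset hs e))

theorem tauk_prime_pow {p : ℕ} (hp : p.Prime) (k β : ℕ) : tauk k (p ^ β) = k.multichoose β := by
  simpa using tauk_prod_pow (s := {p}) (by simpa using hp) (fun _ => β) k

section UniqueFactorization

variable {α ι : Type*} [Fintype ι] {P : ι → α}

theorem Multiset.prod_sum_nsmul_singleton [CommMonoid α] (v : ι → ℕ) :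
    (∑ i, v i • ({P i} : Multiset α)).prod = ∏ i, P i ^ v i := by
  simp [Multiset.prod_sum, Multiset.prod_nsmul]

theorem Multiset.count_sum_nsmul_singleton [DecidableEq α] (hinj : P.Injective) (v : ι → ℕ)
    (i : ι) : (∑ j, v j • ({P j} : Multiset α)).count (P i) = v i := by
  rw [Multiset.count_sum', Finset.sum_eq_single i
    (fun j _ hji => by simp [hinj.ne hji.symm]) (by simp)]
  simp

variable [CommMonoidWithZero α] [NormalizationMonoid α] [UniqueFactorizationMonoid α]
  [Subsingleton αˣ]

theorem normalizedFactors_prod_pow (hP : ∀ i, Prime (P i)) (v : ι → ℕ) :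
    normalizedFactors (∏ i, P i ^ v i) = ∑ i, v i • {P i} := by
  rw [← Multiset.prod_sum_nsmul_singleton, normalizedFactors_prod_of_prime]
  intro x hx
  obtain ⟨i, -, hi⟩ := Multiset.mem_sum.1 hx
  rw [Multiset.mem_singleton.1 (Multiset.mem_of_mem_nsmul hi)]
  exact hP i

variable [DecidableEq α]

theorem count_normalizedFactors_prod_pow (hP : ∀ i, Prime (P i)) (hinj : P.Injective)
    (v : ι → ℕ) (i : ι) : (normalizedFactors (∏ j, P j ^ v j)).count (P i) = v i := by
  rw [normalizedFactors_prod_pow hP, Multiset.count_sum_nsmul_singleton hinj]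

theorem prod_pow_count_normalizedFactors (hinj : P.Injective) {a : α} (ha : a ≠ 0)
    (hfac : ∀ Q ∈ normalizedFactors a, Q ∈ Set.range P) :
    ∏ i, P i ^ (normalizedFactors a).count (P i) = a := by
  have hnf : ∑ i, (normalizedFactors a).count (P i) • {P i} = normalizedFactors a := by
    ext Q
    by_cases hQ : Q ∈ Set.range P
    · obtain ⟨i, rfl⟩ := hQ
      exact Multiset.count_sum_nsmul_singleton hinj _ i
    · rw [Multiset.count_eq_zero_of_notMem (mt (hfac Q) hQ), Multiset.count_sum']
      exact sum_eq_zero fun i _ => by simp [Ne.symm (mt (⟨i, ·⟩) hQ)]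
  rw [← Multiset.prod_sum_nsmul_singleton, hnf, ← associated_iff_eq]
  exact prod_normalizedFactors ha

end UniqueFactorization

theorem Ideal.eq_of_prime_natCast_mem {R : Type*} [CommRing R] {P : Ideal R} (hP : P ≠ ⊤) {p q : ℕ}
    (hp : p.Prime) (hq : q.Prime) (hpP : (p : R) ∈ P) (hqP : (q : R) ∈ P) : p = q := by
  by_contra hpq
  obtain ⟨a, b, hab⟩ := (Nat.isCoprime_iff_coprime.2 ((Nat.coprime_primes hp hq).2 hpq)).map
    (Int.castRingHom R)
  refine hP ((Ideal.eq_top_iff_one P).2 ?_)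
  rw [← hab]
  simpa using P.add_mem (P.mul_mem_left _ hpP) (P.mul_mem_left _ hqP)

section PrimesAbove

def IsResidueDegree (K : Type) [Field K] [NumberField K] (fd : ℕ → ℕ) : Prop :=
  ∀ p : ℕ, p.Prime → ∀ P : Ideal (𝓞 K), P.IsMaximal → (p : 𝓞 K) ∈ P →
    Ideal.absNorm P = p ^ fd p

def primesAbove (K : Type) [Field K] [NumberField K] (p : ℕ) : Finset (Ideal (𝓞 K)) :=
  UniqueFactorizationMonoid.primeFactors (Ideal.span {(p : 𝓞 K)})

variable {K : Type} [Field K] [NumberField K] {fd : ℕ → ℕ}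

theorem mem_primesAbove_iff_mem_normalizedFactors {p : ℕ} {P : Ideal (𝓞 K)} :
    P ∈ primesAbove K p ↔ P ∈ normalizedFactors (Ideal.span {(p : 𝓞 K)}) :=
  mem_primeFactors

theorem mem_primesAbove {p : ℕ} (hp : p ≠ 0) {P : Ideal (𝓞 K)} :
    P ∈ primesAbove K p ↔ P.IsMaximal ∧ (p : 𝓞 K) ∈ P := by
  have hspan : Ideal.span {(p : 𝓞 K)} ≠ ⊥ := by simpa using hp
  rw [mem_primesAbove_iff_mem_normalizedFactors, Ideal.mem_normalizedFactors_iff hspan,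
    Ideal.span_singleton_le_iff_mem]
  refine ⟨fun ⟨hP, hpP⟩ => ⟨hP.isMaximal ?_, hpP⟩, fun ⟨hP, hpP⟩ => ⟨hP.isPrime, hpP⟩⟩
  rintro rfl
  simp_all

theorem prime_of_mem_primesAbove {p : ℕ} {P : Ideal (𝓞 K)} (hP : P ∈ primesAbove K p) :
    Prime P :=
  prime_of_normalized_factor P (mem_primesAbove_iff_mem_normalizedFactors.1 hP)

theorem card_primesAbove {p : ℕ} (hp : p ≠ 0) : #(primesAbove K p) = rdeg K p := by
  rw [rdeg, ← Nat.card_eq_finsetCard]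
  exact Nat.card_congr (Equiv.subtypeEquivRight fun P => mem_primesAbove hp)

theorem natCard_sum_eq_multichoose_rdeg {p : ℕ} (hp : p ≠ 0) (β : ℕ) :
    Nat.card {v : primesAbove K p → ℕ // ∑ P, v P = β} = (rdeg K p).multichoose β := by
  rw [Nat.card_sum_eq_multichoose, Nat.card_eq_finsetCard, card_primesAbove hp]

theorem eq_of_mem_primesAbove {p q : ℕ} (hp : p.Prime) (hq : q.Prime) {P : Ideal (𝓞 K)}
    (hpP : P ∈ primesAbove K p) (hqP : P ∈ primesAbove K q) : p = q := by
  rw [mem_primesAbove hp.ne_zero] at hpP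
  rw [mem_primesAbove hq.ne_zero] at hqP
  exact Ideal.eq_of_prime_natCast_mem hpP.1.ne_top hp hq hpP.2 hqP.2

theorem exists_mem_primesAbove_of_mem_normalizedFactors {𝔞 Q : Ideal (𝓞 K)}
    (hQ : Q ∈ normalizedFactors 𝔞) :
    ∃ p, p.Prime ∧ p ∣ Ideal.absNorm 𝔞 ∧ Q ∈ primesAbove K p := by
  have hQprime := prime_of_normalized_factor Q hQ
  have : Q.IsMaximal := (Ideal.isPrime_of_prime hQprime).isMaximal hQprime.ne_zero
  obtain ⟨p, m, hm, hpQ, hp, hnorm⟩ := Ideal.exists_prime_and_absNorm_eq_pow Q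
  refine ⟨p, hp, ?_, (mem_primesAbove hp.ne_zero).2 ⟨this, hpQ⟩⟩
  exact (dvd_pow_self p hm.ne').trans (hnorm ▸ map_dvd _ (dvd_of_mem_normalizedFactors hQ))

theorem absNorm_of_mem_primesAbove (hfd : IsResidueDegree K fd) {p : ℕ} (hp : p.Prime)
    {P : Ideal (𝓞 K)} (hP : P ∈ primesAbove K p) : Ideal.absNorm P = p ^ fd p :=
  hfd p hp P ((mem_primesAbove hp.ne_zero).1 hP).1 ((mem_primesAbove hp.ne_zero).1 hP).2

variable {s : Finset ℕ}

theorem primesAbove_sigma_injective (hs : ∀ p ∈ s, p.Prime) :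
    Function.Injective fun x : (Σ p : s, primesAbove K p) => (x.2 : Ideal (𝓞 K)) :=
  fun x y (hxy : (x.2 : Ideal (𝓞 K)) = y.2) => Sigma.subtype_ext
    (Subtype.ext <| eq_of_mem_primesAbove (hs _ x.1.2) (hs _ y.1.2) x.2.2 (hxy ▸ y.2.2)) hxy

theorem prod_pow_count_primesAbove (hs : ∀ p ∈ s, p.Prime) {𝔞 : Ideal (𝓞 K)} (h𝔞 : 𝔞 ≠ ⊥)
    (hfac : ∀ Q ∈ normalizedFactors 𝔞, ∃ p ∈ s, Q ∈ primesAbove K p) :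
    ∏ x : (Σ p : s, primesAbove K p),
      (x.2 : Ideal (𝓞 K)) ^ (normalizedFactors 𝔞).count (x.2 : Ideal (𝓞 K)) = 𝔞 := by
  classical
  refine prod_pow_count_normalizedFactors (primesAbove_sigma_injective hs) h𝔞 fun Q hQ => ?_
  obtain ⟨p, hp, hQp⟩ := hfac Q hQ
  exact ⟨⟨⟨p, hp⟩, ⟨Q, hQp⟩⟩, rfl⟩

theorem absNorm_prod_pow_primesAbove (hfd : IsResidueDegree K fd) (hs : ∀ p ∈ s, p.Prime)
    (v : (Σ p : s, primesAbove K p) → ℕ) :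
    Ideal.absNorm (∏ x, (x.2 : Ideal (𝓞 K)) ^ v x) =
      ∏ p : s, (p : ℕ) ^ (fd p * ∑ P, v ⟨p, P⟩) := by
  rw [map_prod, Fintype.prod_sigma]
  refine Fintype.prod_congr _ _ fun p => ?_
  simp_rw [map_pow, absNorm_of_mem_primesAbove hfd (hs _ p.2) (Subtype.prop _), ← pow_mul,
    prod_pow_eq_pow_sum, mul_sum]

theorem residueDeg_mul_sum_count_eq_finrank (hfd : IsResidueDegree K fd) {p : ℕ}
    (hp : p.Prime) :
    fd p * ∑ P ∈ primesAbove K p, (normalizedFactors (Ideal.span {(p : 𝓞 K)})).count P =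
      Module.finrank ℚ K := by
  have hs : ∀ q ∈ ({p} : Finset ℕ), q.Prime := by simpa using hp
  have hspan : Ideal.span {(p : 𝓞 K)} ≠ ⊥ := by simpa using hp.ne_zero
  have hnorm := absNorm_prod_pow_primesAbove hfd hs
    fun x => (normalizedFactors (Ideal.span {(p : 𝓞 K)})).count (x.2 : Ideal (𝓞 K))
  rw [prod_pow_count_primesAbove hs hspan fun Q hQ => ⟨p, mem_singleton_self p,
    mem_primesAbove_iff_mem_normalizedFactors.2 hQ⟩, Ideal.absNorm_span_natCast,
    RingOfIntegers.rank, Fintype.prod_unique] at hnorm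
  rw [← sum_coe_sort]
  exact (Nat.pow_right_injective hp.two_le hnorm).symm

theorem IsResidueDegree.pos (hfd : IsResidueDegree K fd) {p : ℕ} (hp : p.Prime) : 0 < fd p :=
  Nat.pos_of_mul_pos_right <|
    (residueDeg_mul_sum_count_eq_finrank hfd hp).symm ▸ Module.finrank_pos

theorem rdeg_le_finrank (hfd : IsResidueDegree K fd) {p : ℕ} (hp : p.Prime) :
    rdeg K p ≤ Module.finrank ℚ K := by
  rw [← card_primesAbove hp.ne_zero, ← residueDeg_mul_sum_count_eq_finrank hfd hp,
    card_eq_sum_ones]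
  refine (sum_le_sum fun P hP => ?_).trans (Nat.le_mul_of_pos_left _ (hfd.pos hp))
  exact Multiset.one_le_count_iff_mem.2 (mem_primesAbove_iff_mem_normalizedFactors.1 hP)

theorem absNorm_prod_pow_primesAbove_eq_iff (hfd : IsResidueDegree K fd)
    (hs : ∀ p ∈ s, p.Prime) (e : ℕ → ℕ) (v : (Σ p : s, primesAbove K p) → ℕ) :
    Ideal.absNorm (∏ x, (x.2 : Ideal (𝓞 K)) ^ v x) = ∏ p ∈ s, p ^ e p ↔
      ∀ p : s, fd p * ∑ P, v ⟨p, P⟩ = e p := by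
  rw [absNorm_prod_pow_primesAbove hfd hs, ← prod_coe_sort s,
    (Nat.prod_pow_injective (fun p : s => hs p p.2) Subtype.val_injective).eq_iff, funext_iff]

theorem prod_pow_count_primesAbove_of_absNorm_eq (hs : ∀ p ∈ s, p.Prime) {e : ℕ → ℕ}
    {𝔞 : Ideal (𝓞 K)} (h𝔞 : Ideal.absNorm 𝔞 = ∏ p ∈ s, p ^ e p) :
    ∏ x : (Σ p : s, primesAbove K p),
      (x.2 : Ideal (𝓞 K)) ^ (normalizedFactors 𝔞).count (x.2 : Ideal (𝓞 K)) = 𝔞 := by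
  have hN : ∏ p ∈ s, p ^ e p ≠ 0 := prod_ne_zero_iff.2 fun p hp => pow_ne_zero _ (hs p hp).ne_zero
  have h𝔞0 : 𝔞 ≠ ⊥ := by
    rintro rfl
    rw [Ideal.absNorm_bot] at h𝔞
    exact hN h𝔞.symm
  refine prod_pow_count_primesAbove hs h𝔞0 fun Q hQ => ?_
  obtain ⟨p, hp, hpdvd, hQp⟩ := exists_mem_primesAbove_of_mem_normalizedFactors hQ
  rw [h𝔞] at hpdvd
  exact ⟨p, Nat.primeFactors_prod_pow_subset hs e (Nat.mem_primeFactors.2 ⟨hp, hpdvd, hN⟩), hQp⟩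

theorem aK_prod_pow (hfd : IsResidueDegree K fd) (hs : ∀ p ∈ s, p.Prime) (e : ℕ → ℕ) :
    aK K (∏ p ∈ s, p ^ e p) =
      ∏ p ∈ s, Nat.card {v : primesAbove K p → ℕ // fd p * ∑ P, v P = e p} := by
  classical
  have hnorm := absNorm_prod_pow_primesAbove_eq_iff hfd hs e
  conv_rhs => rw [← prod_coe_sort, ← Nat.card_pi, ← Nat.card_congr Equiv.subtypePiEquivPi]
  rw [aK]
  refine (Nat.card_eq_of_bijective (fun g => ⟨∏ x : (Σ p : s, primesAbove K p),
    (x.2 : Ideal (𝓞 K)) ^ g.1 x.1 x.2, (hnorm _).2 g.2⟩) ⟨fun g g' hgg' => ?_, ?_⟩).symm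
  · ext p P
    have hcount := count_normalizedFactors_prod_pow
      (fun x : Σ p : s, primesAbove K p => prime_of_mem_primesAbove x.2.2)
      (primesAbove_sigma_injective hs)
    exact (hcount (fun x => g.1 x.1 x.2) ⟨p, P⟩).symm.trans <| (congrArg (fun 𝔞 =>
      (normalizedFactors 𝔞.1).count (P : Ideal (𝓞 K))) hgg').trans (hcount _ ⟨p, P⟩)
  · rintro ⟨𝔞, h𝔞⟩
    have hrep := prod_pow_count_primesAbove_of_absNorm_eq hs h𝔞
    exact ⟨⟨fun p P => (normalizedFactors 𝔞).count (P : Ideal (𝓞 K)), (hnorm _).1 (hrep ▸ h𝔞)⟩,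
      Subtype.ext hrep⟩

theorem aK_nStar (hfd : IsResidueDegree K fd) {n : ℕ} :
    aK K (nStar fd n) =
      ∏ p ∈ n.primeFactors, (rdeg K p).multichoose (n.factorization p ⌈/⌉ fd p) := by
  rw [nStar, aK_prod_pow hfd fun p hp => Nat.prime_of_mem_primeFactors hp]
  refine prod_congr rfl fun p hp => ?_
  have hp' := Nat.prime_of_mem_primeFactors hp
  rw [← natCard_sum_eq_multichoose_rdeg hp'.ne_zero]
  exact Nat.card_congr (Equiv.subtypeEquivRight fun v => Nat.mul_right_inj (hfd.pos hp').ne')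

theorem aK_le_aK_nStar (hfd : IsResidueDegree K fd) {n : ℕ} (hn : n ≠ 0) :
    aK K n ≤ aK K (nStar fd n) := by
  conv_lhs => rw [Nat.prod_primeFactors_pow_factorization hn]
  rw [aK_prod_pow hfd fun p hp => Nat.prime_of_mem_primeFactors hp, aK_nStar hfd]
  refine prod_le_prod' fun p hp => ?_
  have hp' := Nat.prime_of_mem_primeFactors hp
  rw [← natCard_sum_eq_multichoose_rdeg hp'.ne_zero]
  exact Nat.card_mul_sum_eq_le_card_sum_eq_ceilDiv _ (hfd.pos hp') _

end PrimesAbove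

theorem aK_le_aK_nStar_eq_prod_le_tauk_general
    (K : Type) [Field K] [NumberField K] (k : ℕ)
    (hdeg : Module.finrank ℚ K = k)
    (fd : ℕ → ℕ)
    -- fd p is the residue degree of the primes above p:
    (hfd : ∀ p : ℕ, p.Prime → ∀ P : Ideal (𝓞 K), P.IsMaximal → (p : 𝓞 K) ∈ P →
      Ideal.absNorm P = p ^ fd p)
    (n : ℕ) (hn : 0 < n) :
    aK K n ≤ aK K (nStar fd n) ∧
    aK K (nStar fd n)
      = ∏ p ∈ n.primeFactors, tauk (rdeg K p) (p ^ ((n.factorization p + fd p - 1) / fd p)) ∧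
    aK K (nStar fd n) ≤ tauk k n := by
  have hprime : ∀ p ∈ n.primeFactors, p.Prime := fun p hp => Nat.prime_of_mem_primeFactors hp
  refine ⟨aK_le_aK_nStar hfd hn.ne', ?_, ?_⟩
  · rw [aK_nStar hfd]
    exact prod_congr rfl fun p hp => (tauk_prime_pow (hprime p hp) _ _).symm
  · rw [aK_nStar hfd]
    conv_rhs => rw [Nat.prod_primeFactors_pow_factorization hn.ne', tauk_prod_pow hprime]
    refine prod_le_prod' fun p hp => Nat.multichoose_le_multichoose
      (hdeg ▸ rdeg_le_finrank hfd (hprime p hp)) ?_ (hdeg ▸ Module.finrank_pos.ne')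
    have hfp : 0 < fd p := IsResidueDegree.pos hfd (hprime p hp)
    exact (ceilDiv_le_iff_le_mul hfp).2 (Nat.le_mul_of_pos_left _ hfp)

/-- a_K(n) ≤ a_K(n*) = ∏_j τ_{r_j}(p_j^{⌈α_j/f_j⌉}) ≤ τ_k(n). -/
theorem aK_le_aK_nStar_eq_prod_le_tauk
    (K : Type) [Field K] [NumberField K] [IsGalois ℚ K] (k : ℕ)
    (hdeg : Module.finrank ℚ K = k)
    (fd : ℕ → ℕ)
    -- fd p is the residue degree of the primes above p:
    (hfd : ∀ p : ℕ, p.Prime → ∀ P : Ideal (𝓞 K), P.IsMaximal → (p : 𝓞 K) ∈ P →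
      Ideal.absNorm P = p ^ fd p)
    (n : ℕ) (hn : 0 < n) :
    aK K n ≤ aK K (nStar fd n) ∧
    aK K (nStar fd n)
      = ∏ p ∈ n.primeFactors, tauk (rdeg K p) (p ^ ((n.factorization p + fd p - 1) / fd p)) ∧
    aK K (nStar fd n) ≤ tauk k n :=
  aK_le_aK_nStar_eq_prod_le_tauk_general K k hdeg fd hfd n hn

end
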